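/- The restriction T|_Q : Q → Q of the operator T to the space Q of even quartics is a linear bijection. -/

import Mathlib

open MeasureTheory Finset

noncomputable section

/-- Membership in `Q`: `f` is an even quartic
`f(x) = ∑ i j, a i j * x i^2 * x j^2` with symmetric coefficients. -/
def inQ (n : ℕ) (f : EuclideanSpace ℝ (Fin n) → ℝ) : Prop :=
  ∃ a : Fin n → Fin n → ℝ, (∀ i j, a i j = a j i) ∧
    ∀ x, f x = ∑ i, ∑ j, a i j * (x i)^2 * (x j)^2

/-- The operator `T` on degree-4 forms:
`(Tf)(x) = ∫_{S^{n-1}} f(v) (v·x)^4 dσ(v)`. -/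
def Tmap {n : ℕ} (σ : Measure (EuclideanSpace ℝ (Fin n)))
    (f : EuclideanSpace ℝ (Fin n) → ℝ) : EuclideanSpace ℝ (Fin n) → ℝ :=
  fun x => ∫ v, f v * (∑ i, v i * x i)^4 ∂σ

/-! Averaging over the `2 ^ n` coordinate reflections, which preserve `σ` and every even quartic,
replaces `(v ⬝ x) ^ 4` by its even part `∑ k l, c k l * (v k x k) ^ 2 * (v l x l) ^ 2` with
`c k k = 1` and `c k l = 3` otherwise. Hence `T f` is the even quartic with coefficients
`c k l * ∫ f v k ^ 2 v l ^ 2 dσ`. If `T f = 0`, all these moments vanish, so `∫ f ^ 2 dσ = 0`.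
A rotation-invariant measure charges every open set meeting the sphere, so `f` vanishes on the
sphere and, being homogeneous, everywhere. As `Q` is finite-dimensional, the injective linear map
`T|_Q` is also onto. -/

section SignFlip

variable {ι : Type*} [DecidableEq ι]

def signFlip (S : Finset ι) (k : ι) : ℝ := if k ∈ S then -1 else 1

lemma signFlip_sq (S : Finset ι) (k : ι) : signFlip S k ^ 2 = 1 := by
  unfold signFlip; split_ifs <;> norm_num

lemma sum_signFlip_insert_of_notMem {s S : Finset ι} {a : ι} (ha : a ∉ s) (haS : a ∉ S)
    (t : ι → ℝ) :
    ∑ k ∈ insert a s, signFlip S k * t k = t a + ∑ k ∈ s, signFlip S k * t k := by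
  rw [sum_insert ha, signFlip, if_neg haS, one_mul]

lemma sum_signFlip_insert_insert {s : Finset ι} {a : ι} (ha : a ∉ s) (S : Finset ι)
    (t : ι → ℝ) :
    ∑ k ∈ insert a s, signFlip (insert a S) k * t k
      = -t a + ∑ k ∈ s, signFlip S k * t k := by
  rw [sum_insert ha, signFlip, if_pos (mem_insert_self a S), neg_one_mul]
  congr 1
  refine sum_congr rfl fun k hk => ?_
  have hka : k ≠ a := ne_of_mem_of_not_mem hk ha
  simp only [signFlip, mem_insert, hka, false_or]

lemma sum_powerset_signFlip_sq (t : ι → ℝ) (s : Finset ι) :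
    ∑ S ∈ s.powerset, (∑ k ∈ s, signFlip S k * t k) ^ 2
      = 2 ^ s.card * ∑ k ∈ s, t k ^ 2 := by
  induction s using Finset.induction_on with
  | empty => simp
  | insert a s ha ih =>
    rw [sum_powerset_insert ha, card_insert_of_notMem ha, sum_insert ha, ← sum_add_distrib]
    have hpair : ∀ S ∈ s.powerset, (∑ k ∈ insert a s, signFlip S k * t k) ^ 2
        + (∑ k ∈ insert a s, signFlip (insert a S) k * t k) ^ 2
        = 2 * t a ^ 2 + 2 * (∑ k ∈ s, signFlip S k * t k) ^ 2 := fun S hS => by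
      rw [sum_signFlip_insert_of_notMem ha (fun h => ha (mem_powerset.mp hS h)),
        sum_signFlip_insert_insert ha]
      ring
    rw [sum_congr rfl hpair, sum_add_distrib, sum_const, card_powerset, nsmul_eq_mul,
      ← mul_sum, ih]
    push_cast
    ring

lemma sum_powerset_signFlip_pow_four (t : ι → ℝ) (s : Finset ι) :
    ∑ S ∈ s.powerset, (∑ k ∈ s, signFlip S k * t k) ^ 4
      = 2 ^ s.card * (3 * (∑ k ∈ s, t k ^ 2) ^ 2 - 2 * ∑ k ∈ s, t k ^ 4) := by
  induction s using Finset.induction_on with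
  | empty => simp
  | insert a s ha ih =>
    rw [sum_powerset_insert ha, card_insert_of_notMem ha, sum_insert ha, sum_insert ha,
      ← sum_add_distrib]
    have hpair : ∀ S ∈ s.powerset, (∑ k ∈ insert a s, signFlip S k * t k) ^ 4
        + (∑ k ∈ insert a s, signFlip (insert a S) k * t k) ^ 4
        = 2 * t a ^ 4 + 12 * t a ^ 2 * (∑ k ∈ s, signFlip S k * t k) ^ 2
          + 2 * (∑ k ∈ s, signFlip S k * t k) ^ 4 := fun S hS => by
      rw [sum_signFlip_insert_of_notMem ha (fun h => ha (mem_powerset.mp hS h)),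
        sum_signFlip_insert_insert ha]
      ring
    rw [sum_congr rfl hpair, sum_add_distrib, sum_add_distrib, sum_const, card_powerset,
      nsmul_eq_mul, ← mul_sum, ← mul_sum, ih, sum_powerset_signFlip_sq]
    push_cast
    ring

lemma three_mul_sq_sum_sub_two_mul_sum_pow_four [Fintype ι] (t : ι → ℝ) :
    3 * (∑ k, t k ^ 2) ^ 2 - 2 * ∑ k, t k ^ 4
      = ∑ k, ∑ l, (if k = l then 1 else 3) * (t k ^ 2 * t l ^ 2) := by
  have hdiag : ∑ k, t k ^ 4 = ∑ k, ∑ l, if k = l then t k ^ 2 * t l ^ 2 else 0 := by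
    simp only [sum_ite_eq, mem_univ, if_true, ← pow_add]
  rw [sq (∑ k, _), sum_mul_sum, hdiag, mul_sum, mul_sum, ← sum_sub_distrib]
  refine sum_congr rfl fun k _ => ?_
  rw [mul_sum, mul_sum, ← sum_sub_distrib]
  refine sum_congr rfl fun l _ => ?_
  split_ifs <;> ring

end SignFlip

section Reflection

variable {ι : Type*} [Fintype ι] [DecidableEq ι]

def reflectCoords (S : Finset ι) : EuclideanSpace ℝ ι ≃ₗᵢ[ℝ] EuclideanSpace ℝ ι :=
  LinearIsometryEquiv.piLpCongrRight 2 fun k =>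
    if k ∈ S then LinearIsometryEquiv.neg ℝ else LinearIsometryEquiv.refl ℝ ℝ

lemma reflectCoords_apply (S : Finset ι) (v : EuclideanSpace ℝ ι) (k : ι) :
    reflectCoords S v k = signFlip S k * v k := by
  by_cases hk : k ∈ S <;> simp [reflectCoords, signFlip, hk]

end Reflection

section InvariantMeasure

variable {E : Type*} [NormedAddCommGroup E] [InnerProductSpace ℝ E]

lemma exists_linearIsometryEquiv_apply_eq {w u : E} (h : ‖w‖ = ‖u‖) :
    ∃ O : E ≃ₗᵢ[ℝ] E, O w = u :=
  ⟨Submodule.reflection (ℝ ∙ (w - u))ᗮ, Submodule.reflection_sub h⟩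

variable [MeasurableSpace E] [BorelSpace E] {σ : Measure E}

lemma integral_comp_linearIsometryEquiv (O : E ≃ₗᵢ[ℝ] E) (hO : Measure.map O σ = σ)
    (h : E → ℝ) : ∫ v, h (O v) ∂σ = ∫ v, h v ∂σ :=
  MeasurePreserving.integral_comp ⟨O.continuous.measurable, hO⟩
    O.toHomeomorph.measurableEmbedding h

lemma measure_sphere_eq_zero_of_isOpen_null [FiniteDimensional ℝ E] {r : ℝ}
    (hσinv : ∀ O : E ≃ₗᵢ[ℝ] E, Measure.map O σ = σ) {U : Set E} (hU : IsOpen U)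
    (hU0 : σ U = 0)
    {w : E} (hw : w ∈ Metric.sphere (0 : E) r) (hwU : w ∈ U) :
    σ (Metric.sphere (0 : E) r) = 0 := by
  refine measure_null_of_locally_null _ fun u hu => ?_
  obtain ⟨O, hO⟩ := exists_linearIsometryEquiv_apply_eq
    ((mem_sphere_zero_iff_norm.mp hw).trans (mem_sphere_zero_iff_norm.mp hu).symm)
  refine ⟨O '' U, mem_nhdsWithin_of_mem_nhds ?_, ?_⟩
  · exact hO ▸ (O.toHomeomorph.isOpenMap U hU).mem_nhds (Set.mem_image_of_mem O hwU)
  · rw [O.image_eq_preimage_symm]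
    refine nonpos_iff_eq_zero.mp ?_
    calc σ (O.symm ⁻¹' U) ≤ Measure.map O.symm σ U :=
          Measure.le_map_apply O.symm.continuous.aemeasurable U
      _ = 0 := by rw [hσinv, hU0]

lemma eqOn_sphere_zero_of_ae_eq_zero [FiniteDimensional ℝ E] {r : ℝ}
    (hσ : σ (Metric.sphere (0 : E) r) ≠ 0)
    (hσinv : ∀ O : E ≃ₗᵢ[ℝ] E, Measure.map O σ = σ)
    {h : E → ℝ} (hc : Continuous h) (hae : h =ᵐ[σ] 0) :
    Set.EqOn h 0 (Metric.sphere (0 : E) r) := by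
  intro w hw
  by_contra hw0
  exact hσ (measure_sphere_eq_zero_of_isOpen_null hσinv (isOpen_ne.preimage hc)
    (ae_iff.mp hae) hw hw0)

lemma Continuous.integrable_of_ae_mem_isCompact {X : Type*} [TopologicalSpace X] [T2Space X]
    [MeasurableSpace X] [OpensMeasurableSpace X] {μ : Measure X} [IsFiniteMeasure μ] {K : Set X}
    (hK : IsCompact K) (hμ : ∀ᵐ x ∂μ, x ∈ K) {g : X → ℝ} (hg : Continuous g) :
    Integrable g μ := by
  rw [← Measure.restrict_eq_self_of_ae_mem hμ]
  exact hg.continuousOn.integrableOn_compact hK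

end InvariantMeasure

section EvenQuartic

variable {ι : Type*} [Fintype ι]

variable (ι) in
def evenQuartic : (ι → ι → ℝ) →ₗ[ℝ] (EuclideanSpace ℝ ι → ℝ) where
  toFun a x := ∑ i, ∑ j, a i j * x i ^ 2 * x j ^ 2
  map_add' a b := by funext x; simp only [Pi.add_apply, add_mul, sum_add_distrib]
  map_smul' c a := by funext x; simp only [Pi.smul_apply, smul_eq_mul, mul_sum, mul_assoc,
    RingHom.id_apply]

lemma evenQuartic_apply (a : ι → ι → ℝ) (x : EuclideanSpace ℝ ι) :
    evenQuartic ι a x = ∑ i, ∑ j, a i j * x i ^ 2 * x j ^ 2 := rfl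

lemma continuous_evenQuartic (a : ι → ι → ℝ) : Continuous (evenQuartic ι a) := by
  simp only [funext (evenQuartic_apply a)]
  fun_prop

lemma evenQuartic_smul (a : ι → ι → ℝ) (c : ℝ) (x : EuclideanSpace ℝ ι) :
    evenQuartic ι a (c • x) = c ^ 4 * evenQuartic ι a x := by
  simp only [evenQuartic_apply, PiLp.smul_apply, smul_eq_mul, mul_sum]
  exact sum_congr rfl fun i _ => sum_congr rfl fun j _ => by ring

lemma evenQuartic_reflectCoords [DecidableEq ι] (a : ι → ι → ℝ) (S : Finset ι)
    (x : EuclideanSpace ℝ ι) : evenQuartic ι a (reflectCoords S x) = evenQuartic ι a x := by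
  simp only [evenQuartic_apply, reflectCoords_apply, mul_pow, signFlip_sq, one_mul]

lemma evenQuartic_indicator [DecidableEq ι] (a : ι → ι → ℝ) (s : Finset ι) :
    evenQuartic ι a (WithLp.toLp 2 fun k => if k ∈ s then 1 else 0)
      = ∑ i ∈ s, ∑ j ∈ s, a i j := by
  simp [evenQuartic_apply, ite_pow, sum_ite_mem]

lemma eq_zero_of_evenQuartic_eq_zero [DecidableEq ι] {a : ι → ι → ℝ}
    (hsym : ∀ i j, a i j = a j i) (h : evenQuartic ι a = 0) : a = 0 := by
  have hsum : ∀ s : Finset ι, ∑ i ∈ s, ∑ j ∈ s, a i j = 0 := fun s => by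
    rw [← evenQuartic_indicator, h, Pi.zero_apply]
  have hdiag : ∀ i, a i i = 0 := fun i => by simpa using hsum {i}
  funext i j
  show a i j = 0
  by_cases hij : i = j
  · exact hij ▸ hdiag i
  · have hpair := hsum {i, j}
    simp only [sum_pair hij] at hpair
    linarith [hdiag i, hdiag j, hsym i j]

lemma evenQuartic_eq_zero_of_eqOn_sphere {a : ι → ι → ℝ}
    (h : Set.EqOn (evenQuartic ι a) 0 (Metric.sphere 0 1)) : evenQuartic ι a = 0 := by
  funext x
  rcases eq_or_ne x 0 with rfl | hx
  · simpa using evenQuartic_smul a 0 0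
  · have hxn : ‖x‖ ≠ 0 := norm_ne_zero_iff.mpr hx
    have hu : ‖x‖⁻¹ • x ∈ Metric.sphere (0 : EuclideanSpace ℝ ι) 1 := by
      rw [mem_sphere_zero_iff_norm, norm_smul, norm_inv, norm_norm, inv_mul_cancel₀ hxn]
    have := h hu
    rw [evenQuartic_smul, Pi.zero_apply, mul_eq_zero] at this
    exact this.resolve_left (pow_ne_zero _ (inv_ne_zero hxn))

end EvenQuartic

section Tmap

variable {n : ℕ} {σ : Measure (EuclideanSpace ℝ (Fin n))}

def Tcoeff (σ : Measure (EuclideanSpace ℝ (Fin n))) (f : EuclideanSpace ℝ (Fin n) → ℝ)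
    (k l : Fin n) : ℝ :=
  (if k = l then 1 else 3) * ∫ v, f v * (v k ^ 2 * v l ^ 2) ∂σ

lemma Tcoeff_symm (f : EuclideanSpace ℝ (Fin n) → ℝ) (k l : Fin n) :
    Tcoeff σ f k l = Tcoeff σ f l k := by
  simp only [Tcoeff, eq_comm (a := k)]
  congr 2 with v
  ring

variable [IsFiniteMeasure σ]
  (hσ : ∀ᵐ v ∂σ, v ∈ Metric.sphere (0 : EuclideanSpace ℝ (Fin n)) 1)
include hσ

lemma Tmap_add_smul {f g : EuclideanSpace ℝ (Fin n) → ℝ} (hf : Continuous f)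
    (hg : Continuous g) (c : ℝ) :
    Tmap σ (fun x => c * f x + g x) = fun x => c * Tmap σ f x + Tmap σ g x := by
  funext x
  have hint : ∀ h : EuclideanSpace ℝ (Fin n) → ℝ, Continuous h →
      Integrable (fun v => h v * (∑ i, v i * x i) ^ 4) σ := fun h hh =>
    Continuous.integrable_of_ae_mem_isCompact (isCompact_sphere 0 1) hσ (by fun_prop)
  simp only [Tmap, add_mul, mul_assoc]
  rw [integral_add ((hint f hf).const_mul c) (hint g hg), integral_const_mul]

lemma Tmap_eq_integral_of_reflectCoords_invariant
    (hσinv : ∀ O : EuclideanSpace ℝ (Fin n) ≃ₗᵢ[ℝ] EuclideanSpace ℝ (Fin n),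
      Measure.map O σ = σ)
    {f : EuclideanSpace ℝ (Fin n) → ℝ} (hf : Continuous f)
    (hfS : ∀ S v, f (reflectCoords S v) = f v) (x : EuclideanSpace ℝ (Fin n)) :
    Tmap σ f x = ∫ v, f v *
      ∑ k, ∑ l, (if k = l then 1 else 3) * ((v k * x k) ^ 2 * (v l * x l) ^ 2) ∂σ := by
  have hreflect : ∀ S : Finset (Fin n),
      ∫ v, f v * (∑ k, signFlip S k * (v k * x k)) ^ 4 ∂σ = Tmap σ f x := fun S => by
    rw [Tmap, ← integral_comp_linearIsometryEquiv (reflectCoords S) (hσinv _)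
      fun v => f v * (∑ i, v i * x i) ^ 4]
    simp only [hfS, reflectCoords_apply, mul_assoc]
  have hint : ∀ S : Finset (Fin n),
      Integrable (fun v => f v * (∑ k, signFlip S k * (v k * x k)) ^ 4) σ := fun S =>
    Continuous.integrable_of_ae_mem_isCompact (isCompact_sphere 0 1) hσ (by fun_prop)
  have hcard : (2 : ℝ) ^ n ≠ 0 := pow_ne_zero _ two_ne_zero
  calc Tmap σ f x
      = (2 ^ n)⁻¹ *
          ∑ S ∈ univ.powerset, ∫ v, f v * (∑ k, signFlip S k * (v k * x k)) ^ 4 ∂σ := by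
        rw [sum_congr rfl fun S _ => hreflect S, sum_const, card_powerset, card_univ,
          Fintype.card_fin, nsmul_eq_mul, Nat.cast_pow, Nat.cast_ofNat,
          inv_mul_cancel_left₀ hcard]
    _ = (2 ^ n)⁻¹ *
          ∫ v, f v * ∑ S ∈ univ.powerset, (∑ k, signFlip S k * (v k * x k)) ^ 4 ∂σ := by
        rw [← integral_finsetSum _ fun S _ => hint S]
        simp only [mul_sum]
    _ = _ := by
        rw [← integral_const_mul]
        simp only [sum_powerset_signFlip_pow_four, card_univ, Fintype.card_fin,
          three_mul_sq_sum_sub_two_mul_sum_pow_four]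
        congr 1 with v
        rw [mul_left_comm, inv_mul_cancel_left₀ hcard]

lemma integrable_evenQuartic_mul_sq_mul_sq (a : Fin n → Fin n → ℝ) (k l : Fin n) :
    Integrable (fun v => evenQuartic (Fin n) a v * (v k ^ 2 * v l ^ 2)) σ :=
  have := continuous_evenQuartic a
  Continuous.integrable_of_ae_mem_isCompact (isCompact_sphere 0 1) hσ (by fun_prop)

lemma Tmap_evenQuartic
    (hσinv : ∀ O : EuclideanSpace ℝ (Fin n) ≃ₗᵢ[ℝ] EuclideanSpace ℝ (Fin n),
      Measure.map O σ = σ)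
    (a : Fin n → Fin n → ℝ) :
    Tmap σ (evenQuartic (Fin n) a) = evenQuartic (Fin n) (Tcoeff σ (evenQuartic (Fin n) a)) := by
  funext x
  set f := evenQuartic (Fin n) a
  have hint := integrable_evenQuartic_mul_sq_mul_sq hσ a
  rw [Tmap_eq_integral_of_reflectCoords_invariant hσ hσinv (continuous_evenQuartic a)
    (evenQuartic_reflectCoords a), evenQuartic_apply]
  calc ∫ v, f v * ∑ k, ∑ l, (if k = l then 1 else 3) * ((v k * x k) ^ 2 * (v l * x l) ^ 2)
          ∂σ
      = ∫ v, ∑ k, ∑ l, ((if k = l then 1 else 3) * x k ^ 2 * x l ^ 2) *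
          (f v * (v k ^ 2 * v l ^ 2)) ∂σ := by
        congr 1 with v
        simp only [mul_sum]
        exact sum_congr rfl fun k _ => sum_congr rfl fun l _ => by ring
    _ = ∑ k, ∑ l, Tcoeff σ f k l * x k ^ 2 * x l ^ 2 := by
        rw [integral_finsetSum _ fun k _ =>
          integrable_finsetSum _ fun l _ => (hint k l).const_mul _]
        refine sum_congr rfl fun k _ => ?_
        rw [integral_finsetSum _ fun l _ => (hint k l).const_mul _]
        refine sum_congr rfl fun l _ => ?_
        rw [integral_const_mul, Tcoeff]
        ring

lemma integral_evenQuartic_mul_sq_mul_sq_eq_zero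
    (hσinv : ∀ O : EuclideanSpace ℝ (Fin n) ≃ₗᵢ[ℝ] EuclideanSpace ℝ (Fin n),
      Measure.map O σ = σ)
    {a : Fin n → Fin n → ℝ} (hT : Tmap σ (evenQuartic (Fin n) a) = 0) (k l : Fin n) :
    ∫ v, evenQuartic (Fin n) a v * (v k ^ 2 * v l ^ 2) ∂σ = 0 := by
  have hcoeff := eq_zero_of_evenQuartic_eq_zero (Tcoeff_symm _)
    ((Tmap_evenQuartic hσ hσinv a).symm.trans hT)
  have hkl := congrFun (congrFun hcoeff k) l
  rw [Tcoeff, Pi.zero_apply, Pi.zero_apply, mul_eq_zero] at hkl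
  exact hkl.resolve_left (by split_ifs <;> norm_num)

lemma evenQuartic_eq_zero_of_Tmap_eq_zero
    (hσ₀ : σ (Metric.sphere 0 1) ≠ 0)
    (hσinv : ∀ O : EuclideanSpace ℝ (Fin n) ≃ₗᵢ[ℝ] EuclideanSpace ℝ (Fin n),
      Measure.map O σ = σ)
    {a : Fin n → Fin n → ℝ} (hT : Tmap σ (evenQuartic (Fin n) a) = 0) :
    evenQuartic (Fin n) a = 0 := by
  set f := evenQuartic (Fin n) a
  have hf : Continuous f := continuous_evenQuartic a
  have hsq : ∫ v, f v * f v ∂σ = 0 := calc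
    ∫ v, f v * f v ∂σ = ∫ v, ∑ k, ∑ l, a k l * (f v * (v k ^ 2 * v l ^ 2)) ∂σ := by
        congr 1 with v
        change f v * evenQuartic (Fin n) a v = _
        simp only [evenQuartic_apply, mul_sum]
        exact sum_congr rfl fun k _ => sum_congr rfl fun l _ => by ring
    _ = 0 := by
        rw [integral_finsetSum _ fun k _ => integrable_finsetSum _ fun l _ =>
          (integrable_evenQuartic_mul_sq_mul_sq hσ a k l).const_mul _]
        refine sum_eq_zero fun k _ => ?_
        rw [integral_finsetSum _ fun l _ =>
          (integrable_evenQuartic_mul_sq_mul_sq hσ a k l).const_mul _]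
        refine sum_eq_zero fun l _ => ?_
        rw [integral_const_mul, integral_evenQuartic_mul_sq_mul_sq_eq_zero hσ hσinv hT, mul_zero]
  have hae : f =ᵐ[σ] 0 := by
    have hint : Integrable (fun v => f v * f v) σ :=
      Continuous.integrable_of_ae_mem_isCompact (isCompact_sphere 0 1) hσ (by fun_prop)
    filter_upwards [(integral_eq_zero_iff_of_nonneg (fun v => mul_self_nonneg (f v)) hint).mp hsq]
      with v hv
    exact mul_self_eq_zero.mp hv
  exact evenQuartic_eq_zero_of_eqOn_sphere (eqOn_sphere_zero_of_ae_eq_zero hσ₀ hσinv hf hae)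

end Tmap

lemma Submodule.bijOn_of_linear_of_eq_zero {K V : Type*} [Field K] [AddCommGroup V] [Module K V]
    (W : Submodule K V) [FiniteDimensional K W] {T : V → V} (hmaps : Set.MapsTo T W W)
    (hlin : ∀ c : K, ∀ f ∈ W, ∀ g ∈ W, T (c • f + g) = c • T f + T g)
    (hker : ∀ f ∈ W, T f = 0 → f = 0) : Set.BijOn T W W := by
  have hT0 : T 0 = 0 := by
    simpa using hlin 1 0 W.zero_mem 0 W.zero_mem
  let L : W →ₗ[K] W :=
    { toFun f := ⟨T f, hmaps f.2⟩
      map_add' f g := Subtype.ext (by simpa using hlin 1 f f.2 g g.2)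
      map_smul' c f := Subtype.ext (by simpa [hT0] using hlin c f f.2 0 W.zero_mem) }
  have hL : Function.Injective L := by
    rw [injective_iff_map_eq_zero]
    exact fun f hf => Subtype.ext (hker f f.2 (congrArg Subtype.val hf))
  refine ⟨hmaps, fun f hf g hg hfg => ?_, fun g hg => ?_⟩
  · exact congrArg Subtype.val (@hL ⟨f, hf⟩ ⟨g, hg⟩ (Subtype.ext hfg))
  · obtain ⟨f, hf⟩ := LinearMap.injective_iff_surjective.mp hL ⟨g, hg⟩
    exact ⟨f, f.2, congrArg Subtype.val hf⟩

section EvenQuartics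

variable {n : ℕ}

lemma inQ_iff {f : EuclideanSpace ℝ (Fin n) → ℝ} :
    inQ n f ↔ ∃ a, (∀ i j, a i j = a j i) ∧ evenQuartic (Fin n) a = f :=
  exists_congr fun _ => and_congr_right fun _ =>
    ⟨fun hf => (funext hf).symm, fun hf x => by rw [← hf]; rfl⟩

variable (n) in
def evenQuartics : Submodule ℝ (EuclideanSpace ℝ (Fin n) → ℝ) where
  carrier := {f | inQ n f}
  zero_mem' := inQ_iff.mpr ⟨0, fun _ _ => rfl, map_zero _⟩
  add_mem' {f g} hf hg := by
    obtain ⟨a, ha, rfl⟩ := inQ_iff.mp hf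
    obtain ⟨b, hb, rfl⟩ := inQ_iff.mp hg
    exact inQ_iff.mpr ⟨a + b, fun i j => congrArg₂ (· + ·) (ha i j) (hb i j), map_add _ a b⟩
  smul_mem' c f hf := by
    obtain ⟨a, ha, rfl⟩ := inQ_iff.mp hf
    exact inQ_iff.mpr ⟨c • a, fun i j => congrArg (c * ·) (ha i j), map_smul _ c a⟩

instance : FiniteDimensional ℝ (evenQuartics n) :=
  Submodule.finiteDimensional_of_le (S₂ := LinearMap.range (evenQuartic (Fin n)))
    fun _ hf => (inQ_iff.mp hf).imp fun _ => And.right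

lemma Tmap_mem_evenQuartics {σ : Measure (EuclideanSpace ℝ (Fin n))} [IsFiniteMeasure σ]
    (hσ : ∀ᵐ v ∂σ, v ∈ Metric.sphere (0 : EuclideanSpace ℝ (Fin n)) 1)
    (hσinv : ∀ O : EuclideanSpace ℝ (Fin n) ≃ₗᵢ[ℝ] EuclideanSpace ℝ (Fin n),
      Measure.map O σ = σ)
    {f : EuclideanSpace ℝ (Fin n) → ℝ} (hf : f ∈ evenQuartics n) :
    Tmap σ f ∈ evenQuartics n := by
  obtain ⟨a, -, rfl⟩ := inQ_iff.mp hf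
  exact inQ_iff.mpr ⟨_, Tcoeff_symm _, (Tmap_evenQuartic hσ hσinv a).symm⟩

end EvenQuartics

theorem stmt8 (n : ℕ)
    (σ : Measure (EuclideanSpace ℝ (Fin n)))
    (hσprob : IsProbabilityMeasure σ)
    (hσsphere : σ (Metric.sphere (0 : EuclideanSpace ℝ (Fin n)) 1) = 1)
    (hσinv : ∀ O : EuclideanSpace ℝ (Fin n) ≃ₗᵢ[ℝ] EuclideanSpace ℝ (Fin n),
      Measure.map (⇑O) σ = σ) :
    Set.BijOn (Tmap σ) {f | inQ n f} {f | inQ n f} ∧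
    (∀ f ∈ {f | inQ n f}, ∀ g ∈ {f | inQ n f}, ∀ c : ℝ,
      Tmap σ (fun x => c * f x + g x) = fun x => c * Tmap σ f x + Tmap σ g x) := by
  have hσ : ∀ᵐ v ∂σ, v ∈ Metric.sphere (0 : EuclideanSpace ℝ (Fin n)) 1 :=
    (ae_mem_iff_measure_eq Metric.isClosed_sphere.measurableSet.nullMeasurableSet).mpr
      (by rw [hσsphere, measure_univ])
  have hlin : ∀ f ∈ {f | inQ n f}, ∀ g ∈ {f | inQ n f}, ∀ c : ℝ,
      Tmap σ (fun x => c * f x + g x) = fun x => c * Tmap σ f x + Tmap σ g x := by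
    intro f hf g hg c
    obtain ⟨a, -, rfl⟩ := inQ_iff.mp hf
    obtain ⟨b, -, rfl⟩ := inQ_iff.mp hg
    exact Tmap_add_smul hσ (continuous_evenQuartic a) (continuous_evenQuartic b) c
  refine ⟨(evenQuartics n).bijOn_of_linear_of_eq_zero
    (fun f hf => Tmap_mem_evenQuartics hσ hσinv hf) (fun c f hf g hg => hlin f hf g hg c)
    fun f hf hT => ?_, hlin⟩
  obtain ⟨a, -, rfl⟩ := inQ_iff.mp hf
  exact evenQuartic_eq_zero_of_Tmap_eq_zero hσ (by simp [hσsphere]) hσinv hT
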